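/- Under Assumptions (A1) and (A3), define for ε, δ > 0 and s ≥ 0: M₃^{ε,δ}(s) := (1/ε)·κ'(x(s))·∫_{π_δ(s)}^{s} ( f(x^δ(r)) − f(x^δ(π_δ(r))) ) dr + (1/ε)·κ'(x(s))·( f(x^δ(π_δ(s))) − f(x(π_δ(s))) )·(s − π_δ(s)). Then for every integer p ≥ 1 there exist ε₀ > 0 and a constant C > 0, independent of t, ε and δ, such that for all ε, δ ∈ (0, ε₀) and all t ≥ 0: |∫₀ᵗ E(s,t)·M₃^{ε,δ}(s) ds|^p ≤ C·(δ^p/ε^p)·(δ^p + ε^p + δ^{p/2}·ε^p) + C·δ^{2p}/ε^p. -/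

import Mathlib

/-!
The exact and the sampled trajectories both stay in a fixed interval `[-B, B]`, since on its
boundary the contraction of `f` beats the bounded feedback; on `[-B, B]` the `C¹` function `f` is
Lipschitz. So the sampled trajectory moves by `O(δ)` within a sampling interval, and a barrier
argument for `|x - x^δ|`, which needs `λ > L_κ`, gives `|x - x^δ| = O(δ)` uniformly in time. Both
summands of `M₃` are then `O(δ²/ε)` pointwise, and since `∫₀ᵗ E(s,t) ds ≤ C_*` we get
`|∫₀ᵗ E(s,t) M₃(s) ds|^p ≤ C δ^{2p}/ε^p`, already the last term of the bound.

The integral equations use the Bochner integral, which is `0` for non-integrable integrands, so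
integrability of their right-hand sides has to be proved; this is done by a continuation argument.
-/

/-- The sampling map `π_δ(t) = δ·⌊t/δ⌋`. -/
noncomputable def piD (δ t : ℝ) : ℝ := δ * (⌊t / δ⌋ : ℤ)

open Set MeasureTheory Filter Topology intervalIntegral

section Sampling

variable {δ : ℝ}

theorem piD_nonneg (hδ : 0 < δ) {t : ℝ} (ht : 0 ≤ t) : 0 ≤ piD δ t :=
  mul_nonneg hδ.le (Int.cast_nonneg (Int.floor_nonneg.2 (div_nonneg ht hδ.le)))

theorem piD_le (hδ : 0 < δ) (t : ℝ) : piD δ t ≤ t := by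
  rw [piD, mul_comm]
  exact (le_div_iff₀ hδ).1 (Int.floor_le (t / δ))

theorem sub_piD_lt (hδ : 0 < δ) (t : ℝ) : t - piD δ t < δ := by
  have h := (div_lt_iff₀ hδ).1 (Int.lt_floor_add_one (t / δ))
  rw [piD]
  linarith

theorem piD_eventuallyEq (hδ : 0 < δ) (s : ℝ) : piD δ =ᶠ[𝓝[≥] s] fun _ => piD δ s := by
  filter_upwards [Ico_mem_nhdsGE (show s < piD δ s + δ by linarith [sub_piD_lt hδ s])]
    with u ⟨hsu, hu⟩
  have hfloor : ⌊u / δ⌋ = ⌊s / δ⌋ := by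
    rw [Int.floor_eq_iff, div_lt_iff₀ hδ]
    refine ⟨(Int.floor_le _).trans (by gcongr), ?_⟩
    rw [piD] at hu
    linarith
  rw [piD, piD, hfloor]

theorem measurable_comp_piD (z : ℝ → ℝ) (δ : ℝ) : Measurable fun s => z (piD δ s) :=
  (measurable_from_top (f := fun n : ℤ => z (δ * n))).comp (measurable_id.div_const δ).floor

end Sampling

theorem abs_le_of_hasDerivWithinAt_Ici {g g' : ℝ → ℝ} {a b D : ℝ}
    (hc : ContinuousOn g (Icc a b)) (hd : ∀ u ∈ Ico a b, HasDerivWithinAt g (g' u) (Ici u) u)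
    (ha : |g a| ≤ D)
    (hbdry : ∀ u ∈ Ico a b, |g u| = D → g u * g' u < 0) : ∀ u ∈ Icc a b, |g u| ≤ D := by
  have hD : 0 ≤ D := (abs_nonneg _).trans ha
  have hsq : ∀ u ∈ Icc a b, g u ^ 2 ≤ D ^ 2 := by
    refine image_le_of_deriv_right_lt_deriv_boundary' (f := fun u => g u ^ 2)
      (f' := fun u => 2 * (g u * g' u)) (hc.pow 2)
      (fun u hu => ((hd u hu).fun_pow 2).congr_deriv (by push_cast; ring))
      (by simpa only [sq_abs] using pow_le_pow_left₀ (abs_nonneg _) ha 2) continuousOn_const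
      (fun u _ => hasDerivWithinAt_const u _ (D ^ 2)) fun u hu hgu => ?_
    have hgu : |g u| = D := (sq_eq_sq₀ (abs_nonneg _) hD).1 (by rw [sq_abs]; exact hgu)
    linarith [hbdry u hu hgu]
  exact fun u hu => abs_le_of_sq_le_sq (hsq u hu) hD

section IntegralEquation

variable {G y : ℝ → ℝ} {y₀ : ℝ}

theorem continuousOn_Icc_of_eq_integral (hy : ∀ t, 0 ≤ t → y t = y₀ + ∫ s in (0:ℝ)..t, G s)
    {b : ℝ} (hb : 0 ≤ b) (hG : IntervalIntegrable G volume 0 b) : ContinuousOn y (Icc 0 b) := by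
  have h := continuousOn_primitive_interval' hG left_mem_uIcc
  rw [uIcc_of_le hb] at h
  exact (continuousOn_const.add h).congr fun u hu => hy u hu.1

theorem hasDerivWithinAt_Ici_of_eq_integral (hy : ∀ t, 0 ≤ t → y t = y₀ + ∫ s in (0:ℝ)..t, G s)
    {s b : ℝ} (hs : 0 ≤ s) (hsb : s < b) (hG : IntervalIntegrable G volume 0 b)
    (hmeas : AEStronglyMeasurable G (volume.restrict (Ioo s b)))
    (hcont : ContinuousWithinAt G (Ici s) s) : HasDerivWithinAt y (G s) (Ici s) s := by
  have hGs : IntervalIntegrable G volume 0 s :=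
    hG.mono_set (by rw [uIcc_of_le hs, uIcc_of_le (hs.trans hsb.le)]; gcongr)
  have hftc := integral_hasDerivWithinAt_right (s := Ici s) (t := Ioi s) hGs
    ⟨Ioo s b, Ioo_mem_nhdsGT hsb, hmeas⟩ (hcont.mono Ioi_subset_Ici_self)
  exact (hftc.const_add y₀).congr (fun u hu => hy u (hs.trans hu)) (hy s hs)

theorem intervalIntegrable_of_eq_integral
    (hy : ∀ t, 0 ≤ t → y t = y₀ + ∫ s in (0:ℝ)..t, G s) {T : ℝ} (hT : 0 ≤ T)
    (hG : ∀ A, MeasurableSet A → A ⊆ Icc 0 T → ContinuousOn y A → IntegrableOn G A) :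
    IntervalIntegrable G volume 0 T := by
  set S := {τ ∈ Icc 0 T | IntervalIntegrable G volume 0 τ}
  have hS0 : (0:ℝ) ∈ S := ⟨⟨le_rfl, hT⟩, .refl⟩
  have hbdd : BddAbove S := ⟨T, fun τ hτ => hτ.1.2⟩
  set τ := sSup S
  have hτ0 : 0 ≤ τ := le_csSup hbdd hS0
  have hτT : τ ≤ T := csSup_le ⟨0, hS0⟩ fun _ h => h.1.2
  have hcont : ContinuousOn y (Ico 0 τ) := by
    intro s hs
    obtain ⟨b, hbS, hsb⟩ := exists_lt_of_lt_csSup ⟨0, hS0⟩ hs.2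
    exact ((continuousOn_Icc_of_eq_integral hy hbS.1.1 hbS.2) s ⟨hs.1, hsb.le⟩)
      |>.mono_of_mem_nhdsWithin
        (mem_nhdsWithin.2 ⟨Iio b, isOpen_Iio, hsb, fun u hu => ⟨hu.2.1, hu.1.le⟩⟩)
  have hτS : IntervalIntegrable G volume 0 τ :=
    (intervalIntegrable_iff_integrableOn_Ico_of_le hτ0).2
      (hG _ measurableSet_Ico (Ico_subset_Icc_self.trans (Icc_subset_Icc_right hτT)) hcont)
  obtain hτT | hτT := hτT.eq_or_lt
  · exact hτT ▸ hτS
  -- past `τ` the integral is junk (zero), so `y` is frozen at `y₀` there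
  have hfrozen : EqOn y (fun _ => y₀) (Ioc τ T) := fun u hu => by
    have hnot : ¬ IntervalIntegrable G volume 0 u := fun h =>
      (le_csSup hbdd ⟨⟨hτ0.trans hu.1.le, hu.2⟩, h⟩).not_gt hu.1
    simpa [integral_undef hnot] using hy u (hτ0.trans hu.1.le)
  have hrest : IntegrableOn G (Ioc τ T) :=
    hG _ measurableSet_Ioc (Ioc_subset_Icc_self.trans (Icc_subset_Icc_left hτ0))
      (continuousOn_const.congr hfrozen)
  have hGT : IntervalIntegrable G volume 0 T := by
    rw [intervalIntegrable_iff_integrableOn_Ioc_of_le hT, ← Ioc_union_Ioc_eq_Ioc hτ0 hτT.le]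
    exact ((intervalIntegrable_iff_integrableOn_Ioc_of_le hτ0).1 hτS).union hrest
  exact absurd (le_csSup hbdd ⟨⟨hT, le_rfl⟩, hGT⟩) hτT.not_ge

theorem continuousOn_Ici_of_eq_integral (hy : ∀ t, 0 ≤ t → y t = y₀ + ∫ s in (0:ℝ)..t, G s)
    (hG : ∀ T, 0 ≤ T → IntervalIntegrable G volume 0 T) : ContinuousOn y (Ici 0) := by
  intro s (hs : 0 ≤ s)
  exact (continuousOn_Icc_of_eq_integral hy (by linarith) (hG (s + 1) (by linarith))
    s ⟨hs, by linarith⟩).mono_of_mem_nhdsWithin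
    (mem_nhdsWithin.2 ⟨Iio (s + 1), isOpen_Iio, by simp, fun u hu => ⟨hu.2, hu.1.le⟩⟩)

end IntegralEquation

/-- `w s` is the time at which the state fed back at time `s` was measured: `w = id` is continuous
feedback and `w = piD δ` is sample-and-hold. -/
structure IsAdmissibleDelay (w : ℝ → ℝ) : Prop where
  aemeasurable_comp : ∀ (z : ℝ → ℝ) (A : Set ℝ), MeasurableSet A → ContinuousOn z A →
    AEMeasurable (fun s => z (w s)) (volume.restrict A)
  continuousWithinAt_comp : ∀ (z : ℝ → ℝ) (s : ℝ), ContinuousWithinAt z (Ici s) s →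
    ContinuousWithinAt (fun u => z (w u)) (Ici s) s

theorem isAdmissibleDelay_id : IsAdmissibleDelay id :=
  ⟨fun _ _ hA hz => hz.aemeasurable hA, fun _ _ hz => hz⟩

theorem isAdmissibleDelay_piD {δ : ℝ} (hδ : 0 < δ) : IsAdmissibleDelay (piD δ) :=
  ⟨fun z _ _ _ => (measurable_comp_piD z δ).aemeasurable, fun z s _ =>
    continuousWithinAt_const.congr_of_eventuallyEq
      ((piD_eventuallyEq hδ s).fun_comp z) rfl⟩

section Feedback

variable {f κ w y : ℝ → ℝ} {y₀ : ℝ}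

theorem aestronglyMeasurable_feedback (hf : Continuous f) (hκ : Continuous κ)
    (hw : IsAdmissibleDelay w) {A : Set ℝ} (hA : MeasurableSet A) (hyA : ContinuousOn y A) :
    AEStronglyMeasurable (fun s => f (y s) + κ (y (w s))) (volume.restrict A) :=
  (((hf.comp_continuousOn hyA).aemeasurable hA).add
    (hκ.measurable.comp_aemeasurable (hw.aemeasurable_comp y A hA hyA))).aestronglyMeasurable

theorem hasDerivWithinAt_Ici_of_feedback (hf : Continuous f) (hκ : Continuous κ)
    (hw : IsAdmissibleDelay w)
    (hy : ∀ t, 0 ≤ t → y t = y₀ + ∫ s in (0:ℝ)..t, (f (y s) + κ (y (w s))))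
    {s b : ℝ} (hs : 0 ≤ s) (hsb : s < b)
    (hG : IntervalIntegrable (fun s => f (y s) + κ (y (w s))) volume 0 b) :
    HasDerivWithinAt y (f (y s) + κ (y (w s))) (Ici s) s := by
  have hyc := continuousOn_Icc_of_eq_integral hy (hs.trans hsb.le) hG
  have hys : ContinuousWithinAt y (Ici s) s :=
    (hyc s ⟨hs, hsb.le⟩).mono_of_mem_nhdsWithin
      (mem_of_superset (Icc_mem_nhdsGE hsb) (Icc_subset_Icc_left hs))
  exact hasDerivWithinAt_Ici_of_eq_integral hy hs hsb hG
    (aestronglyMeasurable_feedback hf hκ hw measurableSet_Ioo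
      (hyc.mono fun u hu => ⟨hs.trans hu.1.le, hu.2.le⟩))
    ((hf.continuousAt.comp_continuousWithinAt hys).add
      (hκ.continuousAt.comp_continuousWithinAt (hw.continuousWithinAt_comp y s hys)))

theorem abs_le_of_feedback (hf : Continuous f) (hκ : Continuous κ) (hw : IsAdmissibleDelay w)
    {lam γ B : ℝ} (hcontr : ∀ a b : ℝ, (a - b) * (f a - f b) ≤ -lam * (a - b) ^ 2)
    (hκbd : ∀ a, |κ a| ≤ γ) (hy₀ : |y₀| ≤ B) (hB : |f 0| + γ < lam * B)
    (hy : ∀ t, 0 ≤ t → y t = y₀ + ∫ s in (0:ℝ)..t, (f (y s) + κ (y (w s))))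
    {t : ℝ} (ht : 0 ≤ t) : |y t| ≤ B := by
  by_cases hG : IntervalIntegrable (fun s => f (y s) + κ (y (w s))) volume 0 t
  swap
  -- the integral is junk (zero), so `y t = y₀`
  · rwa [hy t ht, integral_undef hG, add_zero]
  refine abs_le_of_hasDerivWithinAt_Ici (continuousOn_Icc_of_eq_integral hy ht hG)
    (fun u hu => hasDerivWithinAt_Ici_of_feedback hf hκ hw hy hu.1 hu.2 hG)
    (by rwa [hy 0 le_rfl, integral_same, add_zero]) (fun u _ hu => ?_) t ⟨ht, le_rfl⟩
  have hγ : 0 ≤ γ := (abs_nonneg _).trans (hκbd 0)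
  have hBpos : 0 < B :=
    (hu ▸ abs_nonneg (y u)).lt_of_ne (by rintro rfl; linarith [abs_nonneg (f 0)])
  have h1 : y u * (f (y u) - f 0) ≤ -lam * B ^ 2 := by
    simpa [← hu, sq_abs] using hcontr (y u) 0
  have h2 : y u * f 0 ≤ B * |f 0| := hu ▸ (le_abs_self _).trans_eq (abs_mul _ _)
  have h3 : y u * κ (y (w u)) ≤ B * γ :=
    (le_abs_self _).trans (by rw [abs_mul, hu]; exact mul_le_mul_of_nonneg_left (hκbd _) hBpos.le)
  linarith [mul_pos hBpos (sub_pos.2 hB)]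

theorem intervalIntegrable_of_feedback (hf : Continuous f) (hκ : Continuous κ)
    (hw : IsAdmissibleDelay w) {γ B : ℝ} (hκbd : ∀ a, |κ a| ≤ γ)
    (hy : ∀ t, 0 ≤ t → y t = y₀ + ∫ s in (0:ℝ)..t, (f (y s) + κ (y (w s))))
    (hyB : ∀ t, 0 ≤ t → |y t| ≤ B) {T : ℝ} (hT : 0 ≤ T) :
    IntervalIntegrable (fun s => f (y s) + κ (y (w s))) volume 0 T := by
  obtain ⟨Mf, hMf⟩ := isCompact_Icc.exists_bound_of_continuousOn (hf.continuousOn (s := Icc (-B) B))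
  refine intervalIntegrable_of_eq_integral hy hT fun A hA hAT hyA => ?_
  refine IntegrableOn.of_bound ((measure_mono hAT).trans_lt measure_Icc_lt_top)
    (aestronglyMeasurable_feedback hf hκ hw hA hyA) (Mf + γ)
    (ae_restrict_of_forall_mem hA fun s hs => (norm_add_le _ _).trans (add_le_add ?_ (hκbd _)))
  exact hMf _ (abs_le.1 (hyB s (hAT hs).1))

structure IsRegularSolution (f κ w y : ℝ → ℝ) (B : ℝ) : Prop where
  abs_le : ∀ t, 0 ≤ t → |y t| ≤ B
  continuousOn : ContinuousOn y (Ici 0)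
  hasDerivWithinAt : ∀ s, 0 ≤ s → HasDerivWithinAt y (f (y s) + κ (y (w s))) (Ici s) s

theorem isRegularSolution_of_feedback (hf : Continuous f) (hκ : Continuous κ)
    (hw : IsAdmissibleDelay w) {lam γ B : ℝ}
    (hcontr : ∀ a b : ℝ, (a - b) * (f a - f b) ≤ -lam * (a - b) ^ 2)
    (hκbd : ∀ a, |κ a| ≤ γ) (hy₀ : |y₀| ≤ B) (hB : |f 0| + γ < lam * B)
    (hy : ∀ t, 0 ≤ t → y t = y₀ + ∫ s in (0:ℝ)..t, (f (y s) + κ (y (w s)))) :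
    IsRegularSolution f κ w y B := by
  have hyB : ∀ t, 0 ≤ t → |y t| ≤ B := fun t ht =>
    abs_le_of_feedback hf hκ hw hcontr hκbd hy₀ hB hy ht
  have hG : ∀ T, 0 ≤ T → IntervalIntegrable _ volume 0 T := fun T hT =>
    intervalIntegrable_of_feedback hf hκ hw hκbd hy hyB hT
  exact ⟨hyB, continuousOn_Ici_of_eq_integral hy hG, fun s hs =>
    hasDerivWithinAt_Ici_of_feedback hf hκ hw hy hs (lt_add_one s) (hG _ (by linarith))⟩

theorem IsRegularSolution.abs_sub_le {B : ℝ} (hy : IsRegularSolution f κ w y B) {Mf γ : ℝ}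
    (hMf : ∀ a, |a| ≤ B → |f a| ≤ Mf) (hκbd : ∀ a, |κ a| ≤ γ) {s t : ℝ} (hs : 0 ≤ s)
    (hst : s ≤ t) : |y t - y s| ≤ (Mf + γ) * (t - s) :=
  norm_image_sub_le_of_norm_deriv_right_le_segment (hy.continuousOn.mono fun _ hu => hs.trans hu.1)
    (fun u hu => hy.hasDerivWithinAt u (hs.trans hu.1))
    (fun u hu => (abs_add_le _ _).trans
      (add_le_add (hMf _ (hy.abs_le u (hs.trans hu.1))) (hκbd _))) t ⟨hst, le_rfl⟩

end Feedback

theorem exists_isRegularSolution {f κ x : ℝ → ℝ} {xd : ℝ → ℝ → ℝ} {x₀ lam γ : ℝ}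
    (hf : Continuous f) (hκ : Continuous κ) (hlam : 0 < lam)
    (hcontr : ∀ a b : ℝ, (a - b) * (f a - f b) ≤ -lam * (a - b) ^ 2) (hκbd : ∀ a, |κ a| ≤ γ)
    (hx : ∀ t, 0 ≤ t → x t = x₀ + ∫ s in (0:ℝ)..t, (f (x s) + κ (x s)))
    (hxd : ∀ δ, 0 < δ → ∀ t, 0 ≤ t →
      xd δ t = x₀ + ∫ s in (0:ℝ)..t, (f (xd δ s) + κ (xd δ (piD δ s)))) :
    ∃ B, IsRegularSolution f κ id x B ∧ ∀ δ, 0 < δ → IsRegularSolution f κ (piD δ) (xd δ) B := by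
  obtain ⟨B, hx₀B, hB⟩ : ∃ B, |x₀| ≤ B ∧ |f 0| + γ < lam * B :=
    ⟨max |x₀| ((|f 0| + γ) / lam + 1), le_max_left _ _,
      (div_lt_iff₀' hlam).1 ((lt_add_one _).trans_le (le_max_right _ _))⟩
  exact ⟨B, isRegularSolution_of_feedback hf hκ isAdmissibleDelay_id hcontr hκbd hx₀B hB hx,
    fun δ hδ => isRegularSolution_of_feedback hf hκ (isAdmissibleDelay_piD hδ) hcontr hκbd hx₀B hB
      (hxd δ hδ)⟩

theorem abs_sub_le_of_feedback {f κ w x y : ℝ → ℝ} {lam L η D : ℝ}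
    (hcontr : ∀ a b : ℝ, (a - b) * (f a - f b) ≤ -lam * (a - b) ^ 2)
    (hκLip : ∀ a b : ℝ, |κ a - κ b| ≤ L * |a - b|) (hL : 0 ≤ L) (hD : 0 < D)
    (hLD : L * η < (lam - L) * D) (hcx : ContinuousOn x (Ici 0)) (hcy : ContinuousOn y (Ici 0))
    (hdx : ∀ s, 0 ≤ s → HasDerivWithinAt x (f (x s) + κ (x s)) (Ici s) s)
    (hdy : ∀ s, 0 ≤ s → HasDerivWithinAt y (f (y s) + κ (y (w s))) (Ici s) s)
    (h0 : x 0 = y 0) (hη : ∀ s, 0 ≤ s → |y s - y (w s)| ≤ η) {t : ℝ} (ht : 0 ≤ t) :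
    |x t - y t| ≤ D := by
  refine abs_le_of_hasDerivWithinAt_Ici (g := fun s => x s - y s)
    ((hcx.sub hcy).mono fun u hu => hu.1) (fun u hu => (hdx u hu.1).sub (hdy u hu.1))
    (by simp [h0, hD.le]) (fun u hu he => ?_) t ⟨ht, le_rfl⟩
  have h1 : (x u - y u) * (f (x u) - f (y u)) ≤ -lam * D ^ 2 := by
    simpa [← he, sq_abs] using hcontr (x u) (y u)
  have hdelay : |x u - y (w u)| ≤ D + η :=
    (abs_sub_le _ (y u) _).trans (add_le_add he.le (hη u hu.1))
  have h2 : (x u - y u) * (κ (x u) - κ (y (w u))) ≤ D * (L * (D + η)) :=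
    (le_abs_self _).trans_eq (abs_mul _ _) |>.trans <| by
      rw [he]
      exact mul_le_mul_of_nonneg_left
        ((hκLip _ _).trans (mul_le_mul_of_nonneg_left hdelay hL)) hD.le
  linarith [mul_pos hD (sub_pos.2 hLD)]

theorem abs_intervalIntegral_mul_le {E g : ℝ → ℝ} {a b c : ℝ} (hab : a ≤ b)
    (hE : IntervalIntegrable E volume a b) (hE0 : ∀ s ∈ Ioc a b, 0 ≤ E s)
    (hg : ∀ s ∈ Ioc a b, |g s| ≤ c) :
    |∫ s in a..b, E s * g s| ≤ c * ∫ s in a..b, E s := by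
  rw [← intervalIntegral.integral_const_mul, ← Real.norm_eq_abs]
  refine norm_integral_le_of_norm_le hab (ae_of_all _ fun s hs => ?_) (hE.const_mul c)
  rw [Real.norm_eq_abs, abs_mul, abs_of_nonneg (hE0 s hs), mul_comm]
  exact mul_le_mul_of_nonneg_right (hg s hs) (hE0 s hs)

theorem intervalIntegrable_exp_integral {h : ℝ → ℝ} {t : ℝ} (ht : 0 ≤ t)
    (hh : ContinuousOn h (Icc 0 t)) :
    IntervalIntegrable (fun s => Real.exp (∫ u in s..t, h u)) volume 0 t := by
  rw [← uIcc_of_le ht] at hh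
  exact (Real.continuous_exp.comp_continuousOn (continuousOn_primitive_interval_left
    (hh.integrableOn_compact isCompact_uIcc))).intervalIntegrable

theorem exists_sampled_error_bound {f κ x : ℝ → ℝ} {xd : ℝ → ℝ → ℝ} {lam L γ B : ℝ}
    (hfd : Differentiable ℝ f) (hf' : Continuous (deriv f)) (hL : 0 ≤ L) (hgap : L < lam)
    (hcontr : ∀ a b : ℝ, (a - b) * (f a - f b) ≤ -lam * (a - b) ^ 2)
    (hκLip : ∀ a b : ℝ, |κ a - κ b| ≤ L * |a - b|) (hκbd : ∀ a, |κ a| ≤ γ)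
    (hx : IsRegularSolution f κ id x B)
    (hxd : ∀ δ, 0 < δ → IsRegularSolution f κ (piD δ) (xd δ) B)
    (h0 : ∀ δ, 0 < δ → x 0 = xd δ 0) :
    ∃ K, 0 ≤ K ∧ ∀ δ, 0 < δ → ∀ s, 0 ≤ s →
      |f (xd δ s) - f (xd δ (piD δ s))| ≤ K * δ ∧ |f (xd δ s) - f (x s)| ≤ K * δ := by
  obtain ⟨Lf, hLf⟩ := (contDiff_one_iff_deriv.2 ⟨hfd, hf'⟩).contDiffOn.exists_lipschitzOnWith
    one_ne_zero (convex_Icc (-B) B) isCompact_Icc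
  have hfLip : ∀ a b, |a| ≤ B → |b| ≤ B → |f a - f b| ≤ Lf * |a - b| := fun a b ha hb => by
    simpa [Real.dist_eq] using hLf.dist_le_mul a (abs_le.1 ha) b (abs_le.1 hb)
  obtain ⟨Mf, hMf⟩ := isCompact_Icc.exists_bound_of_continuousOn
    (hfd.continuous.continuousOn (s := Icc (-B) B))
  have hMf' : ∀ a, |a| ≤ B → |f a| ≤ Mf := fun a ha => hMf a (abs_le.1 ha)
  have hB : 0 ≤ B := (abs_nonneg _).trans (hx.abs_le 0 le_rfl)
  have hM : 0 ≤ Mf + γ := add_nonneg ((abs_nonneg _).trans (hMf' 0 (by simpa using hB)))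
    ((abs_nonneg _).trans (hκbd 0))
  have hstep : ∀ δ, 0 < δ → ∀ s, 0 ≤ s → |xd δ s - xd δ (piD δ s)| ≤ (Mf + γ) * δ :=
    fun δ hδ s hs => ((hxd δ hδ).abs_sub_le hMf' hκbd (piD_nonneg hδ hs) (piD_le hδ s)).trans
      (mul_le_mul_of_nonneg_left (sub_piD_lt hδ s).le hM)
  set D := (L * (Mf + γ) + 1) / (lam - L)
  have hD : 0 < D := div_pos (by positivity) (sub_pos.2 hgap)
  have hLD : ∀ δ, 0 < δ → L * ((Mf + γ) * δ) < (lam - L) * (D * δ) := fun δ hδ => by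
    have hDgap : (lam - L) * D = L * (Mf + γ) + 1 := mul_div_cancel₀ _ (sub_pos.2 hgap).ne'
    rw [← mul_assoc (lam - L), hDgap]
    linarith
  have hclose : ∀ δ, 0 < δ → ∀ s, 0 ≤ s → |x s - xd δ s| ≤ D * δ := fun δ hδ s hs =>
    abs_sub_le_of_feedback hcontr hκLip hL (mul_pos hD hδ) (hLD δ hδ) hx.continuousOn
      (hxd δ hδ).continuousOn hx.hasDerivWithinAt (hxd δ hδ).hasDerivWithinAt (h0 δ hδ)
      (hstep δ hδ) hs
  refine ⟨Lf * (Mf + γ + D), by positivity, fun δ hδ s hs => ⟨?_, ?_⟩⟩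
  · calc |f (xd δ s) - f (xd δ (piD δ s))| ≤ Lf * |xd δ s - xd δ (piD δ s)| :=
          hfLip _ _ ((hxd δ hδ).abs_le s hs) ((hxd δ hδ).abs_le _ (piD_nonneg hδ hs))
      _ ≤ Lf * ((Mf + γ + D) * δ) := by gcongr; linarith [hstep δ hδ s hs, mul_pos hD hδ]
      _ = _ := by ring
  · calc |f (xd δ s) - f (x s)| ≤ Lf * |x s - xd δ s| := by
          rw [abs_sub_comm (x s)]; exact hfLip _ _ ((hxd δ hδ).abs_le s hs) (hx.abs_le s hs)
      _ ≤ Lf * ((Mf + γ + D) * δ) := by gcongr; linarith [hclose δ hδ s hs, mul_nonneg hM hδ.le]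
      _ = _ := by ring

theorem abs_remainder_le {f x xδ : ℝ → ℝ} {k L K ε δ s : ℝ} (hε : 0 < ε) (hδ : 0 < δ)
    (hs : 0 ≤ s) (hk : |k| ≤ L) (hstep : ∀ r, 0 ≤ r → |f (xδ r) - f (xδ (piD δ r))| ≤ K * δ)
    (hclose : |f (xδ (piD δ s)) - f (x (piD δ s))| ≤ K * δ) :
    |(1 / ε) * k * (∫ r in (piD δ s)..s, (f (xδ r) - f (xδ (piD δ r))))
      + (1 / ε) * k * (f (xδ (piD δ s)) - f (x (piD δ s))) * (s - piD δ s)|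
      ≤ 2 * L * K * δ ^ 2 / ε := by
  have hπs := piD_le hδ s
  have hsπ : |s - piD δ s| ≤ δ := by
    rw [abs_of_nonneg (sub_nonneg.2 hπs)]; exact (sub_piD_lt hδ s).le
  have hKδ : 0 ≤ K * δ := (abs_nonneg _).trans hclose
  have hI : |∫ r in (piD δ s)..s, (f (xδ r) - f (xδ (piD δ r)))| ≤ K * δ * δ := by
    rw [← Real.norm_eq_abs]
    refine (norm_integral_le_of_norm_le_const fun r hr => hstep r ?_).trans (by gcongr)
    rw [uIoc_of_le hπs] at hr
    exact (piD_nonneg hδ hs).trans hr.1.le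
  have hd : |(f (xδ (piD δ s)) - f (x (piD δ s))) * (s - piD δ s)| ≤ K * δ * δ := by
    rw [abs_mul]; exact mul_le_mul hclose hsπ (abs_nonneg _) hKδ
  have hL : 0 ≤ L := (abs_nonneg k).trans hk
  calc _ = |1 / ε| * |k| * |(∫ r in (piD δ s)..s, (f (xδ r) - f (xδ (piD δ r))))
          + (f (xδ (piD δ s)) - f (x (piD δ s))) * (s - piD δ s)| := by
        rw [← abs_mul, ← abs_mul]; ring_nf
    _ ≤ 1 / ε * L * (K * δ * δ + K * δ * δ) := by
        rw [abs_of_pos (one_div_pos.2 hε)]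
        gcongr
        exact (abs_add_le _ _).trans (add_le_add hI hd)
    _ = 2 * L * K * δ ^ 2 / ε := by ring

theorem stmt17_general
    (f κ : ℝ → ℝ) (x₀ : ℝ) (x : ℝ → ℝ)
    -- Assumption (A1)
    (lam Lκ γ : ℝ)
    (hcontr : ∀ a b : ℝ, (a - b) * (f a - f b) ≤ -lam * (a - b) ^ 2)
    (hκLip : ∀ a b : ℝ, |κ a - κ b| ≤ Lκ * |a - b|)
    (hgap : lam / 2 - Lκ > 0)
    (hκbd : ∀ a : ℝ, |κ a| ≤ γ)
    -- Assumption (A3)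
    (hfd : Differentiable ℝ f) (hfd2 : Differentiable ℝ (deriv f))
    (hκd2 : Differentiable ℝ (deriv κ))
    (Cstar : ℝ)
    (hint : ∀ m : ℕ, (m = 1 ∨ m = 2) → ∀ t : ℝ, 0 ≤ t →
      (∫ s in (0:ℝ)..t,
        Real.exp ((m : ℝ) * ∫ u in s..t, (deriv f (x u) + deriv κ (x u)))) ≤ Cstar)
    -- the closed-loop ODE `dx/dt = f(x) + κ(x)`, `x(0) = x₀`
    (hx : ∀ t : ℝ, 0 ≤ t → x t = x₀ + ∫ s in (0:ℝ)..t, (f (x s) + κ (x s)))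
    -- the sampled-data closed-loop system
    (xd : ℝ → ℝ → ℝ)
    (hxd : ∀ δ : ℝ, 0 < δ → ∀ t : ℝ, 0 ≤ t →
      xd δ t = x₀ + ∫ s in (0:ℝ)..t, (f (xd δ s) + κ (xd δ (piD δ s))))
    :
    ∀ p : ℕ, 1 ≤ p → ∃ ε₀ : ℝ, 0 < ε₀ ∧ ∃ C : ℝ, 0 < C ∧
      ∀ ε δ : ℝ, 0 < ε → ε < ε₀ → 0 < δ → δ < ε₀ → ∀ t : ℝ, 0 ≤ t →
        |∫ s in (0:ℝ)..t,
            Real.exp (∫ u in s..t, (deriv f (x u) + deriv κ (x u))) *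
              ((1 / ε) * deriv κ (x s) *
                  (∫ r in (piD δ s)..s, (f (xd δ r) - f (xd δ (piD δ r))))
                + (1 / ε) * deriv κ (x s) *
                    (f (xd δ (piD δ s)) - f (x (piD δ s))) * (s - piD δ s))| ^ p
          ≤ C * (δ ^ p / ε ^ p) * (δ ^ p + ε ^ p + δ ^ ((p : ℝ) / 2) * ε ^ p)
            + C * δ ^ (2 * p) / ε ^ p := by
  intro p _
  have hL : 0 ≤ Lκ := (abs_nonneg _).trans (by simpa using hκLip 1 0)
  have hκL : LipschitzWith ⟨Lκ, hL⟩ κ :=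
    LipschitzWith.of_dist_le_mul fun a b => by rw [Real.dist_eq, Real.dist_eq]; exact hκLip a b
  have hκ' : ∀ a, |deriv κ a| ≤ Lκ := fun _ => norm_deriv_le_of_lipschitz hκL
  obtain ⟨B, hxR, hxdR⟩ := exists_isRegularSolution hfd.continuous hκL.continuous
    (by linarith) hcontr hκbd hx hxd
  obtain ⟨K, hK, hKbd⟩ := exists_sampled_error_bound hfd hfd2.continuous hL (by linarith) hcontr
    hκLip hκbd hxR hxdR (fun δ hδ => by rw [hx 0 le_rfl, hxd δ hδ 0 le_rfl]; simp)
  have hCstar : 0 ≤ Cstar := by simpa using hint 1 (Or.inl rfl) 0 le_rfl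
  refine ⟨1, one_pos, (2 * Lκ * K * Cstar) ^ p + 1, by positivity, fun ε δ hε _ hδ _ t ht => ?_⟩
  have hE := intervalIntegrable_exp_integral (h := fun u => deriv f (x u) + deriv κ (x u)) ht
    (((hfd2.continuous.comp_continuousOn hxR.continuousOn).add
      (hκd2.continuous.comp_continuousOn hxR.continuousOn)).mono Icc_subset_Ici_self)
  have hEint : ∫ s in (0:ℝ)..t, Real.exp (∫ u in s..t, (deriv f (x u) + deriv κ (x u)))
      ≤ Cstar := by
    simpa using hint 1 (Or.inl rfl) t ht
  have hbound := abs_intervalIntegral_mul_le ht hE (fun s _ => (Real.exp_pos _).le) fun s hs =>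
    abs_remainder_le hε hδ hs.1.le (hκ' (x s)) (fun r hr => (hKbd δ hδ r hr).1)
      (hKbd δ hδ _ (piD_nonneg hδ hs.1.le)).2
  calc _ ≤ (2 * Lκ * K * δ ^ 2 / ε * Cstar) ^ p :=
        pow_le_pow_left₀ (abs_nonneg _) (hbound.trans (by gcongr)) p
    _ = (2 * Lκ * K * Cstar) ^ p * δ ^ (2 * p) / ε ^ p := by ring
    _ ≤ ((2 * Lκ * K * Cstar) ^ p + 1) * δ ^ (2 * p) / ε ^ p := by gcongr; linarith
    _ ≤ _ := le_add_of_nonneg_left (by positivity)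

/-- Uniform-in-time estimate for the term `M₃^{ε,δ}(s) =
(1/ε)·κ'(x(s))·∫_{π_δ(s)}^{s} (f(x^δ(r)) − f(x^δ(π_δ(r)))) dr
+ (1/ε)·κ'(x(s))·(f(x^δ(π_δ(s))) − f(x(π_δ(s))))·(s − π_δ(s))`, integrated against
`E(s,t) = exp(∫ₛᵗ (f'(x(u)) + κ'(x(u))) du)`. -/
theorem stmt17
    (f κ : ℝ → ℝ) (x₀ : ℝ) (x : ℝ → ℝ)
    -- Assumption (A1)
    (lam ξ μ Lκ γ : ℝ) (q : ℕ)
    (hlam : 0 < lam) (hξ : 0 < ξ) (hμ : 0 < μ) (hLκ : 0 < Lκ) (hγ : 0 < γ)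
    (hcontr : ∀ a b : ℝ, (a - b) * (f a - f b) ≤ -lam * (a - b) ^ 2)
    (hfLip : ∀ a b : ℝ, |f a - f b| ≤ (ξ * (|a| ^ q + |b| ^ q) + μ) * |a - b|)
    (hκLip : ∀ a b : ℝ, |κ a - κ b| ≤ Lκ * |a - b|)
    (hgap : lam / 2 - Lκ > 0)
    (hκbd : ∀ a : ℝ, |κ a| ≤ γ)
    -- Assumption (A3)
    (hfd : Differentiable ℝ f) (hfd2 : Differentiable ℝ (deriv f))
    (hκd : Differentiable ℝ κ) (hκd2 : Differentiable ℝ (deriv κ))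
    (K : ℝ) (hK : ∀ y : ℝ, |deriv (deriv κ) y| ≤ K)
    (cf : ℝ) (rf : ℕ) (hf2 : ∀ y : ℝ, |deriv (deriv f) y| ≤ cf * (1 + |y| ^ rf))
    (Cstar : ℝ) (hCstar : 0 < Cstar)
    (hint : ∀ m : ℕ, (m = 1 ∨ m = 2) → ∀ t : ℝ, 0 ≤ t →
      (∫ s in (0:ℝ)..t,
        Real.exp ((m : ℝ) * ∫ u in s..t, (deriv f (x u) + deriv κ (x u)))) ≤ Cstar)
    -- the closed-loop ODE `dx/dt = f(x) + κ(x)`, `x(0) = x₀`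
    (hx : ∀ t : ℝ, 0 ≤ t → x t = x₀ + ∫ s in (0:ℝ)..t, (f (x s) + κ (x s)))
    -- the sampled-data closed-loop system
    (xd : ℝ → ℝ → ℝ)
    (hxd : ∀ δ : ℝ, 0 < δ → ∀ t : ℝ, 0 ≤ t →
      xd δ t = x₀ + ∫ s in (0:ℝ)..t, (f (xd δ s) + κ (xd δ (piD δ s))))
    :
    ∀ p : ℕ, 1 ≤ p → ∃ ε₀ : ℝ, 0 < ε₀ ∧ ∃ C : ℝ, 0 < C ∧
      ∀ ε δ : ℝ, 0 < ε → ε < ε₀ → 0 < δ → δ < ε₀ → ∀ t : ℝ, 0 ≤ t →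
        |∫ s in (0:ℝ)..t,
            Real.exp (∫ u in s..t, (deriv f (x u) + deriv κ (x u))) *
              ((1 / ε) * deriv κ (x s) *
                  (∫ r in (piD δ s)..s, (f (xd δ r) - f (xd δ (piD δ r))))
                + (1 / ε) * deriv κ (x s) *
                    (f (xd δ (piD δ s)) - f (x (piD δ s))) * (s - piD δ s))| ^ p
          ≤ C * (δ ^ p / ε ^ p) * (δ ^ p + ε ^ p + δ ^ ((p : ℝ) / 2) * ε ^ p)
            + C * δ ^ (2 * p) / ε ^ p :=
  stmt17_general f κ x₀ x lam Lκ γ hcontr hκLip hgap hκbd hfd hfd2 hκd2 Cstar hint hx xd hxd
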